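/- Let 1 ≤ j and ℓ ≥ 1 with j + ℓ ≤ k, and suppose b_j > a_{j+1} = b_{j+1} = ⋯ = a_{j+ℓ} = b_{j+ℓ} > a_{j+ℓ+1}. Then every z = (z₁, …, z_k) ∈ Ã_{k+1}(a, b) satisfies z_{j+1} = z_{j+2} = ⋯ = z_{j+ℓ} = 0. -/

import Mathlib

/-!
The characteristic polynomial of the arrow matrix is
`(∏ᵢ (X - bᵢ)) (X - z_{k+1}) - ∑ᵢ |zᵢ|² ∏_{m ≠ i} (X - bₘ)`.
Put `λ = a_{j+1}`. The strict inequalities and the interlacing make `b_{j+1}, …, b_{j+l}` exactly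
the `bᵢ` equal to `λ`, so modulo `(X - λ)^l` the characteristic polynomial is congruent to
`-(∑_{i=j+1}^{j+l} |zᵢ|²) (X - λ)^(l-1) Q` with `Q = ∏_{bᵢ ≠ λ} (X - bᵢ)` and `Q(λ) ≠ 0`.
On the other hand it equals `∏ᵢ (X - aᵢ)`, which `(X - λ)^l` divides, so that sum of squares
vanishes.
-/

open Polynomial

/-- The `(k+1) × (k+1)` Hermitian "arrow" matrix whose upper-left `k × k` block is
`diag(b 1, …, b k)`, whose `(i, k+1)` entry is `conj (z i)` and `(k+1, i)` entry is `z i`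
for `1 ≤ i ≤ k` (1-based indexing of the sequences), and whose `(k+1, k+1)` entry is `w`. -/
def Zarrow (k : ℕ) (b : ℕ → ℝ) (w : ℝ) (z : ℕ → ℂ) :
    Matrix (Fin (k + 1)) (Fin (k + 1)) ℂ :=
  Matrix.of fun i j =>
    if (i : ℕ) < k then
      if (j : ℕ) < k then (if i = j then (b ((i : ℕ) + 1) : ℂ) else 0)
      else (starRingEnd ℂ) (z ((i : ℕ) + 1))
    else
      if (j : ℕ) < k then z ((j : ℕ) + 1)
      else (w : ℂ)

/-- The matrix `Z_{(a,b)}(z)`: the arrow matrix with corner entry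
`z_{k+1} = Σ_{i=1}^{k+1} aᵢ − Σ_{i=1}^{k} bᵢ`. -/
def Zab (k : ℕ) (a b : ℕ → ℝ) (z : ℕ → ℂ) : Matrix (Fin (k + 1)) (Fin (k + 1)) ℂ :=
  Zarrow k b ((∑ i ∈ Finset.Icc 1 (k + 1), a i) - ∑ i ∈ Finset.Icc 1 k, b i) z

/-- `Ã_{k+1}(a, b)`: those `z` (with relevant coordinates `z 1, …, z k`) for which
`Z_{(a,b)}(z)` has characteristic polynomial `∏_{i=1}^{k+1}(X − aᵢ)`. -/
def Atilde (k : ℕ) (a b : ℕ → ℝ) : Set (ℕ → ℂ) :=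
  {z | (Zab k a b z).charpoly = ∏ i ∈ Finset.Icc 1 (k + 1), (X - C (a i : ℂ))}

namespace Matrix

theorem det_fromBlocks_fin_one {R m : Type*} [CommRing R] [IsDomain R] [Fintype m]
    [DecidableEq m] (A : Matrix m m R) (B : Matrix m (Fin 1) R) (C : Matrix (Fin 1) m R)
    (D : Matrix (Fin 1) (Fin 1) R) (hA : A.det ≠ 0) :
    (fromBlocks A B C D).det = A.det * D 0 0 - (C * A.adjugate * B) 0 0 := by
  have hclear : fromBlocks 1 0 (-(C * A.adjugate)) (A.det • 1) * fromBlocks A B C D =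
      fromBlocks A B 0 (A.det • D - C * A.adjugate * B) := by
    rw [fromBlocks_multiply]
    simp [Matrix.mul_assoc, adjugate_mul, sub_eq_neg_add]
  have hdet := congrArg det hclear
  simp only [det_mul, det_fromBlocks_zero₁₂, det_fromBlocks_zero₂₁, det_one, det_fin_one] at hdet
  refine mul_left_cancel₀ hA ?_
  simpa [mul_sub, mul_assoc] using hdet

end Matrix

open Finset Matrix in
theorem charpoly_Zarrow (k : ℕ) (b : ℕ → ℝ) (w : ℝ) (z : ℕ → ℂ) :
    (Zarrow k b w z).charpoly =
      (∏ i : Fin k, (X - C (b (i + 1) : ℂ))) * (X - C (w : ℂ)) -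
        ∑ i : Fin k, C (Complex.normSq (z (i + 1)) : ℂ) *
          ∏ m ∈ univ.erase i, (X - C (b (m + 1) : ℂ)) := by
  have hblocks : (Zarrow k b w z).charmatrix.submatrix finSumFinEquiv finSumFinEquiv =
      fromBlocks (diagonal fun i : Fin k => X - C (b (i + 1) : ℂ))
        (of fun i _ => -C (starRingEnd ℂ (z (i + 1)))) (of fun _ i => -C (z (i + 1)))
        (of fun _ _ => X - C (w : ℂ)) := by
    ext (i | i) (j | j) : 1
    · by_cases hij : i = j <;> simp [Zarrow, hij]
    · simp [Zarrow, Fin.ext_iff, i.is_lt.ne]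
    · simp [Zarrow, Fin.ext_iff, j.is_lt.ne']
    · simp [Zarrow, Subsingleton.elim i j]
  rw [charpoly, ← det_submatrix_equiv_self finSumFinEquiv, hblocks,
    det_fromBlocks_fin_one _ _ _ _ (by
      rw [det_diagonal]; exact prod_ne_zero_iff.2 fun i _ => X_sub_C_ne_zero _), det_diagonal,
    adjugate_diagonal, mul_apply]
  refine congrArg _ (sum_congr rfl fun i _ => ?_)
  simp only [mul_diagonal, of_apply, ← Complex.mul_conj, C_mul]
  ring

open Finset in
theorem sum_eq_zero_of_X_sub_C_pow_card_dvd {K ι : Type*} [Field K] [Fintype ι] [DecidableEq ι]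
    (β c : ι → K) (w μ : K) (S : Finset ι) (hS : ∀ i, i ∈ S ↔ β i = μ)
    (hdvd : (X - C μ) ^ #S ∣ (∏ i, (X - C (β i))) * (X - C w) -
      ∑ i, C (c i) * ∏ m ∈ univ.erase i, (X - C (β m))) :
    ∑ i ∈ S, c i = 0 := by
  set p : K[X] := X - C μ
  set Q : K[X] := ∏ i ∈ Sᶜ, (X - C (β i))
  have hprodS : ∏ i ∈ S, (X - C (β i)) = p ^ #S := by
    rw [prod_congr rfl fun i hi => by rw [(hS i).1 hi], prod_const]
  have hprod : ∏ i, (X - C (β i)) = p ^ #S * Q := by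
    rw [← prod_mul_prod_compl S, hprodS]
  have hsplit : p * ∑ i, C (c i) * ∏ m ∈ univ.erase i, (X - C (β m)) =
      p ^ #S * (C (∑ i ∈ S, c i) * Q) +
        p * ∑ i ∈ Sᶜ, C (c i) * ∏ m ∈ univ.erase i, (X - C (β m)) := by
    have hS_term : ∀ i ∈ S, p * ∏ m ∈ univ.erase i, (X - C (β m)) = p ^ #S * Q := fun i hi => by
      rw [← hprod, ← mul_prod_erase univ _ (mem_univ i), (hS i).1 hi]
    rw [← sum_add_sum_compl S, mul_add, mul_sum, map_sum, sum_mul, mul_sum,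
      sum_congr rfl fun i hi => by rw [mul_left_comm, hS_term i hi, mul_left_comm], ← mul_sum]
  have hSc_dvd : ∀ i ∈ Sᶜ, p ^ #S ∣ ∏ m ∈ univ.erase i, (X - C (β m)) := fun i hi =>
    hprodS ▸ prod_dvd_prod_of_subset _ _ _ fun m hm =>
      mem_erase.2 ⟨ne_of_mem_of_not_mem hm (mem_compl.1 hi), mem_univ m⟩
  have hdvd' : p ^ (#S + 1) ∣ p ^ #S * (C (∑ i ∈ S, c i) * Q) := by
    have : p ^ #S * (C (∑ i ∈ S, c i) * Q) = p ^ (#S + 1) * (Q * (X - C w)) -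
        p * ((∏ i, (X - C (β i))) * (X - C w) - ∑ i, C (c i) * ∏ m ∈ univ.erase i, (X - C (β m))) -
        p * ∑ i ∈ Sᶜ, C (c i) * ∏ m ∈ univ.erase i, (X - C (β m)) := by
      rw [mul_sub p, hsplit, hprod]; ring
    rw [this, pow_succ']
    refine dvd_sub (dvd_sub (dvd_mul_right _ _) (mul_dvd_mul_left p hdvd))
      (mul_dvd_mul_left p (dvd_sum fun i hi => dvd_mul_of_dvd_right (hSc_dvd i hi) _))
  rw [pow_succ, mul_dvd_mul_iff_left (pow_ne_zero _ (X_sub_C_ne_zero μ)), dvd_iff_isRoot,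
    IsRoot, eval_mul, eval_C] at hdvd'
  have hQ : Q.eval μ ≠ 0 := by
    rw [eval_prod, prod_ne_zero_iff]
    intro i hi
    rw [eval_sub, eval_X, eval_C, sub_ne_zero]
    exact fun h => mem_compl.1 hi ((hS i).2 h.symm)
  exact (mul_eq_zero.1 hdvd').resolve_right hQ

theorem antitoneOn_Icc_of_succ_le {α : Type*} [Preorder α] {f : ℕ → α} {p q : ℕ}
    (hf : ∀ n, p ≤ n → n < q → f (n + 1) ≤ f n) : AntitoneOn f (Set.Icc p q) := by
  rintro m ⟨hpm, -⟩ n ⟨-, hnq⟩ hmn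
  induction n, hmn using Nat.le_induction with
  | base => exact le_rfl
  | succ n hmn ih => exact (hf n (hpm.trans hmn) hnq).trans (ih (by omega))

theorem b_succ_eq_iff_of_interlacing {k : ℕ} {a b : ℕ → ℝ}
    (hab : ∀ i, 1 ≤ i → i ≤ k → b i ≤ a i ∧ a (i + 1) ≤ b i) {j l : ℕ} (hjl : j + l ≤ k)
    (hlt1 : a (j + 1) < b j) (heq : ∀ m, j + 1 ≤ m → m ≤ j + l → b m = a (j + 1))
    (hlt2 : a (j + l + 1) < a (j + 1)) {i : ℕ} (hi : i < k) :
    b (i + 1) = a (j + 1) ↔ j ≤ i ∧ i < j + l := by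
  have hb : AntitoneOn b (Set.Icc 1 k) := antitoneOn_Icc_of_succ_le fun n h₁ h₂ =>
    (hab (n + 1) (by omega) h₂).1.trans (hab n h₁ h₂.le).2
  have ha : AntitoneOn a (Set.Icc 1 (k + 1)) := antitoneOn_Icc_of_succ_le fun n h₁ h₂ =>
    (hab n h₁ (by omega)).2.trans (hab n h₁ (by omega)).1
  refine ⟨fun h => ?_, fun ⟨h₁, h₂⟩ => heq _ (by omega) (by omega)⟩
  by_contra hout
  rcases lt_or_ge i j with hlow | hhigh
  · have : b j ≤ b (i + 1) := hb ⟨by omega, by omega⟩ ⟨by omega, by omega⟩ (by omega)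
    linarith
  · have : a (i + 1) ≤ a (j + l + 1) := ha ⟨by omega, by omega⟩ ⟨by omega, by omega⟩ (by omega)
    linarith [(hab (i + 1) (by omega) (by omega)).1]

open Finset in
theorem statement5_general (k : ℕ) (a b : ℕ → ℝ)
    (hab : ∀ i, 1 ≤ i → i ≤ k → b i ≤ a i ∧ a (i + 1) ≤ b i)
    (j l : ℕ) (hjl : j + l ≤ k)
    (hlt1 : a (j + 1) < b j)
    (heq : ∀ m, j + 1 ≤ m → m ≤ j + l → a m = a (j + 1) ∧ b m = a (j + 1))
    (hlt2 : a (j + l + 1) < a (j + 1)) :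
    ∀ z ∈ Atilde k a b, ∀ m, j + 1 ≤ m → m ≤ j + l → z m = 0 := by
  intro z hz m hm₁ hm₂
  let S : Finset (Fin k) := (Ico j (j + l)).attachFin fun i hi => by rw [mem_Ico] at hi; omega
  have hS : ∀ i : Fin k, i ∈ S ↔ (b (i + 1) : ℂ) = a (j + 1) := fun i => by
    rw [mem_attachFin, mem_Ico, Complex.ofReal_inj, b_succ_eq_iff_of_interlacing hab hjl hlt1
      (fun m h₁ h₂ => (heq m h₁ h₂).2) hlt2 i.is_lt]
  have hdvd : (X - C (a (j + 1) : ℂ)) ^ #S ∣ (Zab k a b z).charpoly := by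
    rw [hz, card_attachFin, Nat.card_Ico, Nat.add_sub_cancel_left]
    calc (X - C (a (j + 1) : ℂ)) ^ l = ∏ i ∈ Icc (j + 1) (j + l), (X - C (a i : ℂ)) := by
          rw [prod_congr rfl fun i hi => by rw [(heq i (mem_Icc.1 hi).1 (mem_Icc.1 hi).2).1],
            prod_const, Nat.card_Icc, Nat.add_sub_add_right, Nat.add_sub_cancel_left]
      _ ∣ ∏ i ∈ Icc 1 (k + 1), (X - C (a i : ℂ)) :=
          prod_dvd_prod_of_subset _ _ _ fun i hi => by simp only [mem_Icc] at hi ⊢; omega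
  rw [Zab, charpoly_Zarrow] at hdvd
  have hsum := sum_eq_zero_of_X_sub_C_pow_card_dvd _ _ _ _ S hS hdvd
  rw [← Complex.ofReal_sum, Complex.ofReal_eq_zero,
    sum_eq_zero_iff_of_nonneg fun _ _ => Complex.normSq_nonneg _] at hsum
  have hmS : (⟨m - 1, by omega⟩ : Fin k) ∈ S := by
    rw [mem_attachFin, mem_Ico, Fin.val_mk]; omega
  simpa [Nat.sub_add_cancel (by omega : 1 ≤ m)] using hsum _ hmS

/-- case (3).  Suppose `1 ≤ j`, `ℓ ≥ 1`, `j + ℓ ≤ k` and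
`b_j > a_{j+1} = b_{j+1} = ⋯ = a_{j+ℓ} = b_{j+ℓ} > a_{j+ℓ+1}` (1-based).
Then every `z ∈ Ã_{k+1}(a,b)` satisfies `z_{j+1} = ⋯ = z_{j+ℓ} = 0`. -/
theorem statement5 (k : ℕ) (hk : 1 ≤ k) (a b : ℕ → ℝ)
    (hab : ∀ i, 1 ≤ i → i ≤ k → b i ≤ a i ∧ a (i + 1) ≤ b i)
    (j l : ℕ) (hj : 1 ≤ j) (hl : 1 ≤ l) (hjl : j + l ≤ k)
    (hlt1 : a (j + 1) < b j)
    (heq : ∀ m, j + 1 ≤ m → m ≤ j + l → a m = a (j + 1) ∧ b m = a (j + 1))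
    (hlt2 : a (j + l + 1) < a (j + 1)) :
    ∀ z ∈ Atilde k a b, ∀ m, j + 1 ≤ m → m ≤ j + l → z m = 0 :=
  statement5_general k a b hab j l hjl hlt1 heq hlt2
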